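/- arXiv:1802.09763 — 5 statements merged into one kernel-verified Lean document; each statement's English description precedes it below -/
import Mathlib

section
/- Let f : ℝ → ℝ be continuous with primitive F (i.e., F' = f), and let u : ℝ × [0,1] → ℝ be a C² solution of the heat equation with reaction term, u_t = u_xx + f(u), satisfying Dirichlet boundary conditions u(t,0) = u(t,1) = 0 for all t. Then the function V(t) = ∫₀¹ ( (1/2)·(u_x(t,x))² − F(u(t,x)) ) dx satisfies V'(t) = −∫₀¹ (u_t(t,x))² dx for all t. -/
/-!
Differentiating under the integral sign (legitimate because the `t`-derivative of the integrand
is jointly continuous) gives `V' = ∫ (u_x u_xt - f(u) u_t)`. Since `u_t` vanishes on the boundary,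
integration by parts turns `∫ u_x u_tx` into `-∫ u_xx u_t`, so `V' = -∫ (u_xx + f(u)) u_t`, which
is `-∫ u_t²` by the equation.
-/

open Function Set MeasureTheory

theorem intervalIntegral.hasDerivAt_integral_of_continuous_uncurry_deriv
    {E : Type*} [NormedAddCommGroup E] [NormedSpace ℝ E] {g g' : ℝ → ℝ → E} {a b t : ℝ}
    (hg : ∀ s, Continuous (g s)) (hg' : Continuous (uncurry g'))
    (hderiv : ∀ s x, HasDerivAt (fun r => g r x) (g' s x) s) :
    HasDerivAt (fun s => ∫ x in a..b, g s x) (∫ x in a..b, g' t x) t := by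
  obtain ⟨C, hC⟩ := ((isCompact_closedBall t 1).prod isCompact_uIcc).exists_bound_of_continuousOn
    hg'.continuousOn
  refine (hasDerivAt_integral_of_dominated_loc_of_deriv_le (bound := fun _ => C)
    (Metric.closedBall_mem_nhds t one_pos) (.of_forall fun s => (hg s).aestronglyMeasurable)
    ((hg t).intervalIntegrable a b) (hg'.uncurry_left t).aestronglyMeasurable ?_
    intervalIntegrable_const (ae_of_all _ fun x _ s _ => hderiv s x)).2
  exact ae_of_all _ fun x hx s hs => hC (s, x) ⟨hs, uIoc_subset_uIcc hx⟩

theorem intervalIntegral.integral_mul_deriv_eq_neg_integral_deriv_mul_of_eq_zero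
    {φ φ' ψ ψ' : ℝ → ℝ} {a b : ℝ}
    (hφ : ∀ x ∈ uIcc a b, HasDerivAt φ (φ' x) x) (hψ : ∀ x ∈ uIcc a b, HasDerivAt ψ (ψ' x) x)
    (hφ' : IntervalIntegrable φ' volume a b) (hψ' : IntervalIntegrable ψ' volume a b)
    (ha : ψ a = 0) (hb : ψ b = 0) :
    ∫ x in a..b, φ x * ψ' x = -∫ x in a..b, φ' x * ψ x := by
  rw [integral_mul_deriv_eq_deriv_mul hφ hψ hφ' hψ', ha, hb]
  ring

section PartialDerivatives

variable {E : Type*} [NormedAddCommGroup E] [NormedSpace ℝ E] {u : ℝ → ℝ → E}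

theorem Differentiable.hasDerivAt_uncurry_fst (hu : Differentiable ℝ (uncurry u)) (s x : ℝ) :
    HasDerivAt (fun r => u r x) (fderiv ℝ (uncurry u) (s, x) (1, 0)) s :=
  (hu (s, x)).hasFDerivAt.comp_hasDerivAt (l := uncurry u) s
    ((hasDerivAt_id' s).prodMk (hasDerivAt_const s x))

theorem Differentiable.hasDerivAt_uncurry_snd (hu : Differentiable ℝ (uncurry u)) (s x : ℝ) :
    HasDerivAt (u s) (fderiv ℝ (uncurry u) (s, x) (0, 1)) x :=
  (hu (s, x)).hasFDerivAt.comp_hasDerivAt (l := uncurry u) x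
    ((hasDerivAt_const x s).prodMk (hasDerivAt_id' x))

theorem Differentiable.differentiableAt_uncurry_fst (hu : Differentiable ℝ (uncurry u))
    (s x : ℝ) : DifferentiableAt ℝ (fun r => u r x) s :=
  (hu.hasDerivAt_uncurry_fst s x).differentiableAt

theorem Differentiable.differentiableAt_uncurry_snd (hu : Differentiable ℝ (uncurry u))
    (s x : ℝ) : DifferentiableAt ℝ (u s) x :=
  (hu.hasDerivAt_uncurry_snd s x).differentiableAt

theorem ContDiff.uncurry_deriv_fst {n : ℕ} (hu : ContDiff ℝ (n + 1) (uncurry u)) :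
    ContDiff ℝ n (uncurry fun s x => deriv (fun r => u r x) s) := by
  have h : (uncurry fun s x => deriv (fun r => u r x) s) =
      fun p => fderiv ℝ (uncurry u) p (1, 0) :=
    funext fun p => ((hu.differentiable (by simp)).hasDerivAt_uncurry_fst p.1 p.2).deriv
  rw [h]
  exact (hu.fderiv_right le_rfl).clm_apply contDiff_const

theorem ContDiff.uncurry_deriv_snd {n : ℕ} (hu : ContDiff ℝ (n + 1) (uncurry u)) :
    ContDiff ℝ n (uncurry fun s x => deriv (u s) x) := by
  have h : (uncurry fun s x => deriv (u s) x) = fun p => fderiv ℝ (uncurry u) p (0, 1) :=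
    funext fun p => ((hu.differentiable (by simp)).hasDerivAt_uncurry_snd p.1 p.2).deriv
  rw [h]
  exact (hu.fderiv_right le_rfl).clm_apply contDiff_const

theorem ContDiff.deriv_uncurry_fst_snd_comm (hu : ContDiff ℝ 2 (uncurry u)) (s x : ℝ) :
    deriv (fun r => deriv (u r) x) s = deriv (fun y => deriv (fun r => u r y) s) x := by
  set A := fderiv ℝ (uncurry u)
  have hu1 : Differentiable ℝ (uncurry u) := hu.differentiable (by simp)
  have hA : Differentiable ℝ (uncurry (curry A)) := by
    simpa using (hu.fderiv_right (m := 1) le_rfl).differentiable one_ne_zero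
  have hx : (fun r => deriv (u r) x) = fun r => A (r, x) (0, 1) :=
    funext fun r => (hu1.hasDerivAt_uncurry_snd r x).deriv
  have hs : (fun y => deriv (fun r => u r y) s) = fun y => A (s, y) (1, 0) :=
    funext fun y => (hu1.hasDerivAt_uncurry_fst s y).deriv
  have hxs : HasDerivAt (fun r => A (r, x) (0, 1)) (fderiv ℝ A (s, x) (1, 0) (0, 1)) s := by
    simpa using (hA.hasDerivAt_uncurry_fst s x).clm_apply
      (hasDerivAt_const s ((0 : ℝ), (1 : ℝ)))
  have hsx : HasDerivAt (fun y => A (s, y) (1, 0)) (fderiv ℝ A (s, x) (0, 1) (1, 0)) x := by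
    simpa using (hA.hasDerivAt_uncurry_snd s x).clm_apply
      (hasDerivAt_const x ((1 : ℝ), (0 : ℝ)))
  rw [hx, hs, hxs.deriv, hsx.deriv]
  exact hu.contDiffAt.isSymmSndFDerivAt (by simp) _ _

end PartialDerivatives

section ReactionDiffusion

variable {f F : ℝ → ℝ} {u : ℝ → ℝ → ℝ}

theorem hasDerivAt_integral_energy (hf : Continuous f) (hF : ∀ y, HasDerivAt F (f y) y)
    (hu : ContDiff ℝ 2 (uncurry u)) (a b t : ℝ) :
    HasDerivAt (fun s => ∫ x in a..b, ((1 / 2 : ℝ) * deriv (u s) x ^ 2 - F (u s x)))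
      (∫ x in a..b, (deriv (u t) x * deriv (fun y => deriv (fun r => u r y) t) x -
        f (u t x) * deriv (fun r => u r x) t)) t := by
  have hux : ContDiff ℝ 1 (uncurry fun s x => deriv (u s) x) := hu.uncurry_deriv_snd
  have hut : ContDiff ℝ 1 (uncurry fun s x => deriv (fun r => u r x) s) := hu.uncurry_deriv_fst
  have hFc : Continuous F := continuous_iff_continuousAt.2 fun y => (hF y).continuousAt
  refine intervalIntegral.hasDerivAt_integral_of_continuous_uncurry_deriv (g' := fun s x =>
    deriv (u s) x * deriv (fun y => deriv (fun r => u r y) s) x -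
      f (u s x) * deriv (fun r => u r x) s) (fun s => ?_) ?_ fun s x => ?_
  · exact (continuous_const.mul ((hux.continuous.uncurry_left s).pow 2)).sub
      (hFc.comp (hu.continuous.uncurry_left s))
  · exact (hux.continuous.mul (ContDiff.uncurry_deriv_snd (n := 0) hut).continuous).sub
      ((hf.comp hu.continuous).mul hut.continuous)
  · have hux_t : HasDerivAt (fun r => deriv (u r) x)
        (deriv (fun y => deriv (fun r => u r y) s) x) s := by
      rw [← hu.deriv_uncurry_fst_snd_comm]
      exact ((hux.differentiable one_ne_zero).differentiableAt_uncurry_fst s x).hasDerivAt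
    have hu_t := ((hu.differentiable (by simp)).differentiableAt_uncurry_fst s x).hasDerivAt
    refine (((hux_t.pow 2).const_mul (1 / 2 : ℝ)).sub ((hF _).comp s hu_t)).congr_deriv ?_
    norm_num
    ring

theorem integral_deriv_energy_density_eq_neg_integral_sq {a b t : ℝ} (hf : Continuous f)
    (hu : ContDiff ℝ 2 (uncurry u)) (ha : ∀ s, u s a = 0) (hb : ∀ s, u s b = 0)
    (pde : ∀ x ∈ uIcc a b, deriv (fun s => u s x) t = deriv (deriv (u t)) x + f (u t x)) :
    ∫ x in a..b, (deriv (u t) x * deriv (fun y => deriv (fun r => u r y) t) x -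
        f (u t x) * deriv (fun r => u r x) t) =
      -∫ x in a..b, deriv (fun s => u s x) t ^ 2 := by
  have hux : ContDiff ℝ 1 (uncurry fun s x => deriv (u s) x) := hu.uncurry_deriv_snd
  have hut : ContDiff ℝ 1 (uncurry fun s x => deriv (fun r => u r x) s) := hu.uncurry_deriv_fst
  have hu_t : Continuous (u t) := hu.continuous.uncurry_left t
  have hut_t : Continuous fun x => deriv (fun r => u r x) t := hut.continuous.uncurry_left t
  have hux_t : Continuous (deriv (u t)) := hux.continuous.uncurry_left t
  have huxx_t : Continuous (deriv (deriv (u t))) :=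
    (ContDiff.uncurry_deriv_snd (n := 0) hux).continuous.uncurry_left t
  have hutx_t : Continuous (deriv fun y => deriv (fun r => u r y) t) :=
    (ContDiff.uncurry_deriv_snd (n := 0) hut).continuous.uncurry_left t
  have hibp : ∫ x in a..b, deriv (u t) x * deriv (fun y => deriv (fun r => u r y) t) x =
      -∫ x in a..b, deriv (deriv (u t)) x * deriv (fun r => u r x) t :=
    intervalIntegral.integral_mul_deriv_eq_neg_integral_deriv_mul_of_eq_zero
      (fun x _ => ((hux.differentiable one_ne_zero).differentiableAt_uncurry_snd t x).hasDerivAt)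
      (fun x _ => ((hut.differentiable one_ne_zero).differentiableAt_uncurry_snd t x).hasDerivAt)
      (huxx_t.intervalIntegrable a b) (hutx_t.intervalIntegrable a b) (by simp [ha]) (by simp [hb])
  have hpde : ∫ x in a..b, deriv (fun s => u s x) t ^ 2 =
      (∫ x in a..b, deriv (deriv (u t)) x * deriv (fun s => u s x) t) +
        ∫ x in a..b, f (u t x) * deriv (fun s => u s x) t := by
    rw [← intervalIntegral.integral_add]
    · refine intervalIntegral.integral_congr fun x hx => ?_
      simp only [sq, pde x hx]
      ring
    all_goals exact Continuous.intervalIntegrable (by fun_prop) a b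
  rw [intervalIntegral.integral_sub, hibp, hpde]
  · ring
  all_goals exact Continuous.intervalIntegrable (by fun_prop) a b

end ReactionDiffusion

/-- Classical Lyapunov function for `u_t = u_xx + f(u)` with Dirichlet boundary
conditions on `[0,1]`: `V(t) = ∫₀¹ ½ u_x² − F(u) dx` satisfies `V' = −∫₀¹ u_t²`. -/
theorem stmt0
    (f F : ℝ → ℝ) (hf : Continuous f) (hF : ∀ y, HasDerivAt F (f y) y)
    (u : ℝ → ℝ → ℝ) (hu : ContDiff ℝ 2 (Function.uncurry u))
    (pde : ∀ t, ∀ x ∈ Set.Icc (0:ℝ) 1,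
      deriv (fun s => u s x) t = deriv (deriv (u t)) x + f (u t x))
    (bc0 : ∀ t, u t 0 = 0) (bc1 : ∀ t, u t 1 = 0) :
    ∀ t, HasDerivAt
      (fun s => ∫ x in (0:ℝ)..1, ((1/2 : ℝ) * (deriv (u s) x)^2 - F (u s x)))
      (-∫ x in (0:ℝ)..1, (deriv (fun s => u s x) t)^2) t := by
  intro t
  rw [← integral_deriv_energy_density_eq_neg_integral_sq hf hu bc0 bc1
    (by simpa only [uIcc_of_le zero_le_one] using pde t)]
  exact hasDerivAt_integral_energy hf hF hu 0 1 t
end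

section
/- Let L : ℝ³ → ℝ be C² (arguments written L(x,u,p)) satisfying the first-order PDE L_u − L_{xp} − p·L_{up} + f(x,u,p)·L_{pp} = 0 for all (x,u,p), where f is continuous. If u : ℝ × [0,1] → ℝ is a C² solution of u_t = u_xx + f(x,u,u_x) with u(t,0) = u(t,1) = 0 for all t, then V(t) = ∫₀¹ L(x, u(t,x), u_x(t,x)) dx satisfies V'(t) = −∫₀¹ L_{pp}(x, u, u_x)·(u_t)² dx. -/
/-!
Differentiating under the integral sign gives `V' = ∫ (L_u u_t + L_p u_tx)`. Integrating the
second term by parts (the boundary term vanishes since `u_t = 0` at `x = 0, 1`) leaves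
`∫ (L_u - (L_p)_x) u_t`. Along the solution `(L_p)_x = L_xp + u_x L_up + u_xx L_pp`, and the
first-order PDE for `L` together with `u_xx = u_t - f` turns this into `L_u + L_pp u_t`, so
`V' = -∫ L_pp u_t²`.
-/

open Set Function MeasureTheory intervalIntegral

section PartialDerivatives

variable {E : Type*} [NormedAddCommGroup E] [NormedSpace ℝ E]

/- Partial derivatives in coordinates, defined through `deriv` so that they unfold to the
iterated `deriv` expressions in which the PDEs are written. -/

noncomputable def partialFst (G : ℝ × ℝ → E) (q : ℝ × ℝ) : E := deriv (fun s => G (s, q.2)) q.1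

noncomputable def partialSnd (G : ℝ × ℝ → E) (q : ℝ × ℝ) : E := deriv (fun y => G (q.1, y)) q.2

noncomputable def partial₁ (F : ℝ × ℝ × ℝ → E) (v : ℝ × ℝ × ℝ) : E :=
  deriv (fun z => F (z, v.2.1, v.2.2)) v.1

noncomputable def partial₂ (F : ℝ × ℝ × ℝ → E) (v : ℝ × ℝ × ℝ) : E :=
  deriv (fun z => F (v.1, z, v.2.2)) v.2.1

noncomputable def partial₃ (F : ℝ × ℝ × ℝ → E) (v : ℝ × ℝ × ℝ) : E :=
  deriv (fun z => F (v.1, v.2.1, z)) v.2.2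

section TwoVariables

variable {G : ℝ × ℝ → E} {G' : ℝ × ℝ →L[ℝ] E} {q : ℝ × ℝ} {m n : WithTop ℕ∞}

theorem HasFDerivAt.partialFst_eq (h : HasFDerivAt G G' q) : partialFst G q = G' (1, 0) :=
  (h.comp_hasDerivAt q.1 ((hasDerivAt_id _).prodMk (hasDerivAt_const _ q.2))).deriv

theorem HasFDerivAt.partialSnd_eq (h : HasFDerivAt G G' q) : partialSnd G q = G' (0, 1) :=
  (h.comp_hasDerivAt q.2 ((hasDerivAt_const _ q.1).prodMk (hasDerivAt_id _))).deriv

theorem DifferentiableAt.hasDerivAt_partialFst {t x : ℝ} (h : DifferentiableAt ℝ G (t, x)) :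
    HasDerivAt (fun s => G (s, x)) (partialFst G (t, x)) t :=
  (h.comp t (differentiableAt_id.prodMk (differentiableAt_const x))).hasDerivAt

theorem DifferentiableAt.hasDerivAt_partialSnd {t x : ℝ} (h : DifferentiableAt ℝ G (t, x)) :
    HasDerivAt (fun y => G (t, y)) (partialSnd G (t, x)) x :=
  (h.comp x ((differentiableAt_const t).prodMk differentiableAt_id)).hasDerivAt

theorem ContDiff.contDiff_partialFst (h : ContDiff ℝ n G) (hmn : m + 1 ≤ n) :
    ContDiff ℝ m (partialFst G) := by
  have hG := (h.of_le (le_add_self.trans hmn)).differentiable one_ne_zero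
  rw [show partialFst G = fun q => fderiv ℝ G q (1, 0) from
    funext fun q => (hG q).hasFDerivAt.partialFst_eq]
  exact (h.fderiv_right hmn).clm_apply contDiff_const

theorem ContDiff.contDiff_partialSnd (h : ContDiff ℝ n G) (hmn : m + 1 ≤ n) :
    ContDiff ℝ m (partialSnd G) := by
  have hG := (h.of_le (le_add_self.trans hmn)).differentiable one_ne_zero
  rw [show partialSnd G = fun q => fderiv ℝ G q (0, 1) from
    funext fun q => (hG q).hasFDerivAt.partialSnd_eq]
  exact (h.fderiv_right hmn).clm_apply contDiff_const

theorem ContDiff.partialFst_partialSnd (h : ContDiff ℝ 2 G) :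
    partialFst (partialSnd G) = partialSnd (partialFst G) := by
  have hG := h.differentiable (by simp)
  have hG' := (h.fderiv_right (m := 1) le_rfl).differentiable (by simp)
  have hfst : partialFst G = fun q => fderiv ℝ G q (1, 0) :=
    funext fun q => (hG q).hasFDerivAt.partialFst_eq
  have hsnd : partialSnd G = fun q => fderiv ℝ G q (0, 1) :=
    funext fun q => (hG q).hasFDerivAt.partialSnd_eq
  funext q
  rw [hfst, hsnd, ((hG' q).hasFDerivAt.clm_apply (hasFDerivAt_const _ q)).partialFst_eq,
    ((hG' q).hasFDerivAt.clm_apply (hasFDerivAt_const _ q)).partialSnd_eq]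
  simpa using h.contDiffAt.isSymmSndFDerivAt (by simp) (1, 0) (0, 1)

end TwoVariables

section ThreeVariables

variable {F : ℝ × ℝ × ℝ → E} {F' : ℝ × ℝ × ℝ →L[ℝ] E} {v : ℝ × ℝ × ℝ} {m n : WithTop ℕ∞}

theorem HasFDerivAt.partial₁_eq (h : HasFDerivAt F F' v) : partial₁ F v = F' (1, 0, 0) :=
  (h.comp_hasDerivAt v.1 ((hasDerivAt_id _).prodMk
    ((hasDerivAt_const _ v.2.1).prodMk (hasDerivAt_const _ v.2.2)))).deriv

theorem HasFDerivAt.partial₂_eq (h : HasFDerivAt F F' v) : partial₂ F v = F' (0, 1, 0) :=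
  (h.comp_hasDerivAt v.2.1 ((hasDerivAt_const _ v.1).prodMk
    ((hasDerivAt_id _).prodMk (hasDerivAt_const _ v.2.2)))).deriv

theorem HasFDerivAt.partial₃_eq (h : HasFDerivAt F F' v) : partial₃ F v = F' (0, 0, 1) :=
  (h.comp_hasDerivAt v.2.2 ((hasDerivAt_const _ v.1).prodMk
    ((hasDerivAt_const _ v.2.1).prodMk (hasDerivAt_id _)))).deriv

theorem DifferentiableAt.hasDerivAt_comp₃ {γ₁ γ₂ γ₃ : ℝ → ℝ} {a₁ a₂ a₃ s : ℝ}
    (hF : DifferentiableAt ℝ F (γ₁ s, γ₂ s, γ₃ s)) (h₁ : HasDerivAt γ₁ a₁ s)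
    (h₂ : HasDerivAt γ₂ a₂ s) (h₃ : HasDerivAt γ₃ a₃ s) :
    HasDerivAt (fun s => F (γ₁ s, γ₂ s, γ₃ s))
      (a₁ • partial₁ F (γ₁ s, γ₂ s, γ₃ s) + a₂ • partial₂ F (γ₁ s, γ₂ s, γ₃ s)
        + a₃ • partial₃ F (γ₁ s, γ₂ s, γ₃ s)) s := by
  have hF' := hF.hasFDerivAt
  have ha : ((a₁, a₂, a₃) : ℝ × ℝ × ℝ) = a₁ • (1, 0, 0) + a₂ • (0, 1, 0) + a₃ • (0, 0, 1) := by
    ext <;> simp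
  rw [hF'.partial₁_eq, hF'.partial₂_eq, hF'.partial₃_eq, ← map_smul, ← map_smul, ← map_smul,
    ← map_add, ← map_add, ← ha]
  exact hF'.comp_hasDerivAt s (h₁.prodMk (h₂.prodMk h₃))

theorem ContDiff.contDiff_partial₂ (h : ContDiff ℝ n F) (hmn : m + 1 ≤ n) :
    ContDiff ℝ m (partial₂ F) := by
  have hF := (h.of_le (le_add_self.trans hmn)).differentiable one_ne_zero
  rw [show partial₂ F = fun v => fderiv ℝ F v (0, 1, 0) from
    funext fun v => (hF v).hasFDerivAt.partial₂_eq]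
  exact (h.fderiv_right hmn).clm_apply contDiff_const

theorem ContDiff.contDiff_partial₃ (h : ContDiff ℝ n F) (hmn : m + 1 ≤ n) :
    ContDiff ℝ m (partial₃ F) := by
  have hF := (h.of_le (le_add_self.trans hmn)).differentiable one_ne_zero
  rw [show partial₃ F = fun v => fderiv ℝ F v (0, 0, 1) from
    funext fun v => (hF v).hasFDerivAt.partial₃_eq]
  exact (h.fderiv_right hmn).clm_apply contDiff_const

end ThreeVariables

end PartialDerivatives

theorem hasDerivAt_intervalIntegral_of_continuous {E : Type*} [NormedAddCommGroup E]
    [NormedSpace ℝ E] [CompleteSpace E] {F F' : ℝ → ℝ → E} {a b t : ℝ}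
    (hF : ∀ s, Continuous (F s)) (hF' : Continuous (uncurry F'))
    (hderiv : ∀ s x, HasDerivAt (fun s => F s x) (F' s x) s) :
    HasDerivAt (fun s => ∫ x in a..b, F s x) (∫ x in a..b, F' t x) t := by
  obtain ⟨C, hC⟩ := ((isCompact_closedBall t 1).prod isCompact_uIcc).exists_bound_of_continuousOn
    hF'.continuousOn
  refine (hasDerivAt_integral_of_dominated_loc_of_deriv_le (bound := fun _ => C)
    (Metric.ball_mem_nhds t one_pos) (.of_forall fun s => (hF s).aestronglyMeasurable)
    ((hF t).intervalIntegrable a b) (hF'.comp (.prodMk_right t)).aestronglyMeasurable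
    (.of_forall fun x hx s hs => hC (s, x) ⟨Metric.ball_subset_closedBall hs, uIoc_subset_uIcc hx⟩)
    intervalIntegrable_const (.of_forall fun x _ s _ => hderiv s x)).2

theorem integral_mul_add_mul_deriv_eq_neg_integral_mul_sq {P A B w w' : ℝ → ℝ} {a b : ℝ}
    (hP : ∀ x ∈ uIcc a b, HasDerivAt P (A x + B x * w x) x)
    (hw : ∀ x ∈ uIcc a b, HasDerivAt w (w' x) x)
    (hA : ContinuousOn A (uIcc a b)) (hB : ContinuousOn B (uIcc a b))
    (hw' : ContinuousOn w' (uIcc a b)) (ha : w a = 0) (hb : w b = 0) :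
    ∫ x in a..b, (A x * w x + P x * w' x) = -∫ x in a..b, B x * w x ^ 2 := by
  have hwc : ContinuousOn w (uIcc a b) := fun x hx => (hw x hx).continuousAt.continuousWithinAt
  have hPc : ContinuousOn P (uIcc a b) := fun x hx => (hP x hx).continuousAt.continuousWithinAt
  have hparts := integral_mul_deriv_eq_deriv_mul hP hw
    ((hA.add (hB.mul hwc)).intervalIntegrable) hw'.intervalIntegrable
  have hAw : IntervalIntegrable (fun x => A x * w x) volume a b := (hA.mul hwc).intervalIntegrable
  have hPw' : IntervalIntegrable (fun x => P x * w' x) volume a b :=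
    (hPc.mul hw').intervalIntegrable
  have hP'w : IntervalIntegrable (fun x => (A x + B x * w x) * w x) volume a b :=
    ((hA.add (hB.mul hwc)).mul hwc).intervalIntegrable
  rw [ha, hb, mul_zero, mul_zero, sub_zero, zero_sub] at hparts
  rw [integral_add hAw hPw', hparts, ← sub_eq_add_neg, ← integral_sub hAw hP'w,
    ← intervalIntegral.integral_neg]
  congr 1
  ext x
  ring

section Lyapunov

variable {F : ℝ × ℝ × ℝ → ℝ} {U : ℝ × ℝ → ℝ}

/-- The 1-jet `(x, u, u_x)` of `U (t, ·)`, the argument of the Lagrangian. -/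
noncomputable def jet (U : ℝ × ℝ → ℝ) (t x : ℝ) : ℝ × ℝ × ℝ := (x, U (t, x), partialSnd U (t, x))

theorem continuous_uncurry_jet (hU : ContDiff ℝ 1 U) : Continuous (uncurry (jet U)) :=
  continuous_snd.prodMk
    (hU.continuous.prodMk (hU.contDiff_partialSnd (m := 0) (by simp)).continuous)

theorem hasDerivAt_comp_jet_time (hF : Differentiable ℝ F) (hU : ContDiff ℝ 2 U) (s x : ℝ) :
    HasDerivAt (fun s => F (jet U s x))
      (partial₂ F (jet U s x) * partialFst U (s, x)
        + partial₃ F (jet U s x) * partialFst (partialSnd U) (s, x)) s := by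
  have hU₀ := hU.differentiable two_ne_zero
  have hU₁ := (hU.contDiff_partialSnd le_rfl).differentiable one_ne_zero
  refine ((hF _).hasDerivAt_comp₃ (hasDerivAt_const s x) (hU₀ (s, x)).hasDerivAt_partialFst
    (hU₁ (s, x)).hasDerivAt_partialFst).congr_deriv ?_
  simp only [smul_eq_mul, zero_mul, zero_add, jet]
  ring

theorem hasDerivAt_partial₃_comp_jet {f : ℝ → ℝ → ℝ → ℝ} (hF : ContDiff ℝ 2 F)
    (hU : ContDiff ℝ 2 U)
    (hFpde : ∀ v, partial₂ F v - partial₁ (partial₃ F) v - v.2.2 * partial₂ (partial₃ F) v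
      + f v.1 v.2.1 v.2.2 * partial₃ (partial₃ F) v = 0)
    {t x : ℝ} (hUpde : partialFst U (t, x)
      = partialSnd (partialSnd U) (t, x) + f x (U (t, x)) (partialSnd U (t, x))) :
    HasDerivAt (fun y => partial₃ F (jet U t y))
      (partial₂ F (jet U t x) + partial₃ (partial₃ F) (jet U t x) * partialFst U (t, x)) x := by
  have hF₃ := (hF.contDiff_partial₃ le_rfl).differentiable one_ne_zero
  have hU₀ := hU.differentiable two_ne_zero
  have hU₁ := (hU.contDiff_partialSnd le_rfl).differentiable one_ne_zero
  refine ((hF₃ _).hasDerivAt_comp₃ (hasDerivAt_id x) (hU₀ (t, x)).hasDerivAt_partialSnd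
    (hU₁ (t, x)).hasDerivAt_partialSnd).congr_deriv ?_
  simp only [smul_eq_mul, one_mul, id, jet]
  rw [hUpde]
  linear_combination -hFpde (x, U (t, x), partialSnd U (t, x))

theorem hasDerivAt_integral_comp_jet {f : ℝ → ℝ → ℝ → ℝ} (hF : ContDiff ℝ 2 F)
    (hU : ContDiff ℝ 2 U)
    (hFpde : ∀ v, partial₂ F v - partial₁ (partial₃ F) v - v.2.2 * partial₂ (partial₃ F) v
      + f v.1 v.2.1 v.2.2 * partial₃ (partial₃ F) v = 0)
    (hUpde : ∀ t, ∀ x ∈ Icc (0 : ℝ) 1, partialFst U (t, x)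
      = partialSnd (partialSnd U) (t, x) + f x (U (t, x)) (partialSnd U (t, x)))
    (hbc₀ : ∀ t, U (t, 0) = 0) (hbc₁ : ∀ t, U (t, 1) = 0) (t : ℝ) :
    HasDerivAt (fun s => ∫ x in (0 : ℝ)..1, F (jet U s x))
      (-∫ x in (0 : ℝ)..1, partial₃ (partial₃ F) (jet U t x) * partialFst U (t, x) ^ 2) t := by
  have hjet := continuous_uncurry_jet (hU.of_le one_le_two)
  have hjet_t : Continuous (jet U t) := hjet.comp (.prodMk_right t)
  have hF₂ : Continuous (partial₂ F) := (hF.contDiff_partial₂ (m := 0) (by simp)).continuous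
  have hF₃ : Continuous (partial₃ F) := (hF.contDiff_partial₃ (m := 0) (by simp)).continuous
  have hF₃₃ : Continuous (partial₃ (partial₃ F)) :=
    ((hF.contDiff_partial₃ (m := 1) le_rfl).contDiff_partial₃ (m := 0) (by simp)).continuous
  have hUt : ContDiff ℝ 1 (partialFst U) := hU.contDiff_partialFst le_rfl
  have hUxt : Continuous (partialFst (partialSnd U)) :=
    ((hU.contDiff_partialSnd (m := 1) le_rfl).contDiff_partialFst (m := 0) (by simp)).continuous
  have hw (x : ℝ) :
      HasDerivAt (fun y => partialFst U (t, y)) (partialFst (partialSnd U) (t, x)) x := by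
    rw [hU.partialFst_partialSnd]
    exact (hUt.differentiable one_ne_zero _).hasDerivAt_partialSnd
  rw [← integral_mul_add_mul_deriv_eq_neg_integral_mul_sq
    (fun x hx => hasDerivAt_partial₃_comp_jet hF hU hFpde
      (hUpde t x (by rwa [uIcc_of_le zero_le_one] at hx)))
    (fun x _ => hw x) (hF₂.comp hjet_t).continuousOn (hF₃₃.comp hjet_t).continuousOn
    (hUxt.comp (.prodMk_right t)).continuousOn
    (by simp [partialFst, hbc₀]) (by simp [partialFst, hbc₁])]
  refine hasDerivAt_intervalIntegral_of_continuous
    (fun s => hF.continuous.comp (hjet.comp (.prodMk_right s))) ?_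
    (hasDerivAt_comp_jet_time (hF.differentiable two_ne_zero) hU)
  exact ((hF₂.comp hjet).mul hUt.continuous).add ((hF₃.comp hjet).mul hUxt)

end Lyapunov

theorem stmt2_general
    (f : ℝ → ℝ → ℝ → ℝ)
    (L : ℝ → ℝ → ℝ → ℝ) (hL : ContDiff ℝ 2 fun v : ℝ × ℝ × ℝ => L v.1 v.2.1 v.2.2)
    (hpde : ∀ x y p,
      deriv (fun w => L x w p) y
        - deriv (fun z => deriv (fun w => L z y w) p) x
        - p * deriv (fun w => deriv (fun w' => L x w w') p) y
        + f x y p * deriv (fun w => deriv (fun w' => L x y w') w) p = 0)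
    (u : ℝ → ℝ → ℝ) (hu : ContDiff ℝ 2 (Function.uncurry u))
    (upde : ∀ t, ∀ x ∈ Set.Icc (0:ℝ) 1,
      deriv (fun s => u s x) t = deriv (deriv (u t)) x + f x (u t x) (deriv (u t) x))
    (bc0 : ∀ t, u t 0 = 0) (bc1 : ∀ t, u t 1 = 0) :
    ∀ t, HasDerivAt
      (fun s => ∫ x in (0:ℝ)..1, L x (u s x) (deriv (u s) x))
      (-∫ x in (0:ℝ)..1,
        deriv (fun w => deriv (fun w' => L x (u t x) w') w) (deriv (u t) x)
          * (deriv (fun s => u s x) t)^2) t :=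
  hasDerivAt_integral_comp_jet hL hu (fun v => hpde v.1 v.2.1 v.2.2) upde bc0 bc1

/-- Matano's Lyapunov function: if the Lagrangian `L(x,u,p)` satisfies
`L_u − L_{xp} − p·L_{up} + f·L_{pp} = 0`, then `V(t) = ∫₀¹ L(x,u,u_x) dx` satisfies
`V'(t) = −∫₀¹ L_{pp}(x,u,u_x)·u_t² dx` along Dirichlet solutions of
`u_t = u_xx + f(x,u,u_x)`. -/
theorem stmt2
    (f : ℝ → ℝ → ℝ → ℝ) (hf : Continuous fun v : ℝ × ℝ × ℝ => f v.1 v.2.1 v.2.2)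
    (L : ℝ → ℝ → ℝ → ℝ) (hL : ContDiff ℝ 2 fun v : ℝ × ℝ × ℝ => L v.1 v.2.1 v.2.2)
    (hpde : ∀ x y p,
      deriv (fun w => L x w p) y
        - deriv (fun z => deriv (fun w => L z y w) p) x
        - p * deriv (fun w => deriv (fun w' => L x w w') p) y
        + f x y p * deriv (fun w => deriv (fun w' => L x y w') w) p = 0)
    (u : ℝ → ℝ → ℝ) (hu : ContDiff ℝ 2 (Function.uncurry u))
    (hux : ∀ t, ContDiff ℝ 1 (deriv (u t)))
    (upde : ∀ t, ∀ x ∈ Set.Icc (0:ℝ) 1,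
      deriv (fun s => u s x) t = deriv (deriv (u t)) x + f x (u t x) (deriv (u t) x))
    (bc0 : ∀ t, u t 0 = 0) (bc1 : ∀ t, u t 1 = 0) :
    ∀ t, HasDerivAt
      (fun s => ∫ x in (0:ℝ)..1, L x (u s x) (deriv (u s) x))
      (-∫ x in (0:ℝ)..1,
        deriv (fun w => deriv (fun w' => L x (u t x) w') w) (deriv (u t) x)
          * (deriv (fun s => u s x) t)^2) t :=
  stmt2_general f L hL hpde u hu upde bc0 bc1
end

section
/- Let f̄ : ℝ² → ℝ be C¹ with globally defined flow Ψ of dq/du = −f̄(u,q). Define F_q(u,q) = ∫₀ᵘ f̄_q(u₁, Ψ^{u₁,u}(q)) du₁, F(u) = ∫₀ᵘ f̄(u₁,0)·exp(F_q(u₁,0)) du₁, L(u,p) = ∫₀ᵖ ∫₀^{p₁} exp(F_q(u, p₂²/2)) dp₂ dp₁ − F(u), and φ(u,p) = ∫₀ᵖ Ψ^{0,u}_q(p₂²/2) dp₂. Then L(u,p) = p·φ(u,p) − Ψ^{0,u}(p²/2) for all (u,p). -/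
/-!
For a `C¹` field the difference `D` of two solutions solves the scalar linear equation
`D' = -c D`, where `c` is the difference quotient (`dslope`) of `f̄ u` between the two solutions;
hence `Ψ v u q' - Ψ v u q = (q' - q) * exp (∫ s in v..u, c s)`. This makes the flow strictly
increasing, hence continuous, in the initial value, which yields continuity in all three
variables, and letting `q' → q` gives the variational equation `∂_q Ψ^{0,u} = exp F_q`.
Combined with `∂_u Ψ^{0,u}(0) = ∂_q Ψ^{0,u}(0) · f̄(u, 0)` this shows `F(u) = Ψ^{0,u}(0)`.
The identity in `p` is then an integration by parts, `∫₀ᵖ φ = p φ(p) - ∫₀ᵖ p₁ ∂_p φ(p₁)`,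
since `p₁ ∂_p φ(p₁) = ∂_{p₁} Ψ^{0,u}(p₁²/2)`.
-/

open Function Real intervalIntegral

theorem hasDerivAt_of_sub_eq_mul {f g : ℝ → ℝ} {a : ℝ} (h : ∀ x, f x - f a = (x - a) * g x)
    (hg : ContinuousAt g a) : HasDerivAt f (g a) a := by
  rw [hasDerivAt_iff_tendsto_slope]
  refine (hg.tendsto.mono_left nhdsWithin_le_nhds).congr' ?_
  filter_upwards [self_mem_nhdsWithin] with x (hx : x ≠ a)
  rw [slope_def_field, h, mul_div_cancel_left₀ _ (sub_ne_zero.2 hx)]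

theorem eq_mul_exp_integral_of_hasDerivAt {D c : ℝ → ℝ} (hc : Continuous c)
    (hD : ∀ s, HasDerivAt D (-(c s * D s)) s) (u v : ℝ) :
    D v = D u * exp (∫ s in v..u, c s) := by
  have hG : ∀ s, HasDerivAt (fun s => D s * exp (∫ r in u..s, c r)) 0 s := fun s => by
    refine ((hD s).mul (hc.integral_hasStrictDerivAt u s).hasDerivAt.exp).congr_deriv ?_
    ring
  have hGv :=
    is_const_of_deriv_eq_zero (fun s => (hG s).differentiableAt) (fun s => (hG s).deriv) v u
  simp only [integral_same, exp_zero, mul_one] at hGv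
  rw [← hGv, integral_symm, exp_neg, mul_assoc, inv_mul_cancel₀ (exp_pos _).ne', mul_one]

theorem dslope_eq_integral {g g' : ℝ → ℝ} (hg : ∀ y, HasDerivAt g (g' y) y) (hg' : Continuous g')
    (a b : ℝ) : dslope g a b = ∫ t in (0:ℝ)..1, g' (a + t * (b - a)) := by
  rcases eq_or_ne b a with rfl | hba
  · simp [dslope_same, (hg b).deriv]
  have hline : ∀ t, HasDerivAt (fun t => g (a + t * (b - a))) (g' (a + t * (b - a)) * (b - a)) t :=
    fun t => (hg _).comp t (((hasDerivAt_id t).mul_const (b - a)).const_add a |>.congr_deriv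
      (one_mul _))
  have hFTC := integral_eq_sub_of_hasDerivAt (fun t _ => hline t)
    (Continuous.intervalIntegrable (by fun_prop) 0 1)
  rw [integral_mul_const] at hFTC
  simp only [one_mul, zero_mul, add_zero, add_sub_cancel] at hFTC
  rw [dslope_of_ne _ hba, slope_def_field, ← hFTC, mul_div_cancel_right₀ _ (sub_ne_zero.2 hba)]

theorem hasDerivAt_of_contDiff_uncurry {f : ℝ → ℝ → ℝ} (hf : ContDiff ℝ 1 (uncurry f)) (s y : ℝ) :
    HasDerivAt (f s) (fderiv ℝ (uncurry f) (s, y) (0, 1)) y :=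
  (hf.differentiable one_ne_zero (s, y)).hasFDerivAt.comp_hasDerivAt y
    ((hasDerivAt_const y s).prodMk (hasDerivAt_id y))

theorem continuous_deriv_of_contDiff_uncurry {f : ℝ → ℝ → ℝ} (hf : ContDiff ℝ 1 (uncurry f)) :
    Continuous fun p : ℝ × ℝ => deriv (f p.1) p.2 := by
  simp_rw [fun p : ℝ × ℝ => (hasDerivAt_of_contDiff_uncurry hf p.1 p.2).deriv]
  exact (hf.continuous_fderiv one_ne_zero).clm_apply continuous_const

theorem continuous_dslope_of_contDiff_uncurry {f : ℝ → ℝ → ℝ} (hf : ContDiff ℝ 1 (uncurry f)) :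
    Continuous fun p : ℝ × ℝ × ℝ => dslope (f p.1) p.2.1 p.2.2 := by
  have hd := continuous_deriv_of_contDiff_uncurry hf
  simp_rw [fun p : ℝ × ℝ × ℝ => dslope_eq_integral
    (fun y => (hasDerivAt_of_contDiff_uncurry hf p.1 y).differentiableAt.hasDerivAt)
    (hd.comp (continuous_const.prodMk continuous_id)) p.2.1 p.2.2]
  have hline : Continuous fun q : (ℝ × ℝ × ℝ) × ℝ =>
      (q.1.1, q.1.2.1 + q.2 * (q.1.2.2 - q.1.2.1)) := by fun_prop
  exact continuous_parametric_intervalIntegral_of_continuous'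
    (f := fun (p : ℝ × ℝ × ℝ) t => deriv (f p.1) (p.2.1 + t * (p.2.2 - p.2.1))) (hd.comp hline) 0 1

theorem continuous_of_strictMono_of_apply_eq {X : Type*} [TopologicalSpace X] {g : X → ℝ → ℝ}
    {h : X → ℝ} {c : ℝ} (hg : ∀ y, Continuous (g · y)) (hmono : ∀ x, StrictMono (g x))
    (hh : ∀ x, g x (h x) = c) : Continuous h := by
  refine continuous_iff_continuousAt.2 fun x₀ => tendsto_order.2 ⟨fun a ha => ?_, fun b hb => ?_⟩
  · have : g x₀ a < c := hh x₀ ▸ hmono x₀ ha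
    filter_upwards [(hg a).continuousAt.eventually_lt_const this] with x hx
    exact (hmono x).lt_iff_lt.1 (hh x ▸ hx)
  · have : c < g x₀ b := hh x₀ ▸ hmono x₀ hb
    filter_upwards [(hg b).continuousAt.eventually_const_lt this] with x hx
    exact (hmono x).lt_iff_lt.1 (hh x ▸ hx)

theorem continuous_uncurry_of_monotone {X : Type*} [TopologicalSpace X] {f : X → ℝ → ℝ}
    (hx : ∀ y, Continuous (f · y)) (hy : ∀ x, Continuous (f x)) (hmono : ∀ x, Monotone (f x)) :
    Continuous (uncurry f) := by
  refine continuous_iff_continuousAt.2 fun ⟨x₀, y₀⟩ =>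
    tendsto_order.2 ⟨fun a ha => ?_, fun b hb => ?_⟩
  · obtain ⟨y₁, hy₁, ha₁⟩ := ((hy x₀).continuousAt.eventually_const_lt ha).exists_lt
    filter_upwards [((hx y₁).continuousAt.eventually_const_lt ha₁).prod_nhds (Ioi_mem_nhds hy₁)]
      with p ⟨hp₁, hp₂⟩
    exact hp₁.trans_le (hmono p.1 (le_of_lt hp₂))
  · obtain ⟨y₁, hy₁, hb₁⟩ := ((hy x₀).continuousAt.eventually_lt_const hb).exists_gt
    filter_upwards [((hx y₁).continuousAt.eventually_lt_const hb₁).prod_nhds (Iio_mem_nhds hy₁)]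
      with p ⟨hp₁, hp₂⟩
    exact (hmono p.1 (le_of_lt hp₂)).trans_lt hp₁

theorem hasDerivAt_integral_of_continuous_uncurry {k : ℝ → ℝ → ℝ} (hk : Continuous (uncurry k))
    (a : ℝ) : HasDerivAt (fun w => ∫ v in a..w, k v w) (k a a) a := by
  simp only [hasDerivAt_iff_isLittleO, integral_same, sub_zero]
  refine Asymptotics.IsLittleO.of_bound fun ε hε => ?_
  obtain ⟨δ, hδ, hball⟩ := Metric.continuousAt_iff.1 (hk.continuousAt (x := (a, a))) ε hε
  filter_upwards [Metric.ball_mem_nhds a hδ] with w hw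
  have hint : IntervalIntegrable (fun v => k v w) MeasureTheory.volume a w :=
    (hk.comp (continuous_id.prodMk continuous_const)).intervalIntegrable a w
  have hsub : (∫ v in a..w, k v w) - (w - a) • k a a = ∫ v in a..w, (k v w - k a a) := by
    rw [integral_sub hint intervalIntegrable_const, integral_const]
  rw [hsub]
  refine (norm_integral_le_of_norm_le_const fun v hv => ?_).trans_eq (by rw [Real.norm_eq_abs])
  rw [← dist_eq_norm]
  refine (hball (x := (v, w)) ?_).le
  rw [Prod.dist_eq, max_lt_iff]
  refine ⟨lt_of_le_of_lt ?_ hw, hw⟩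
  rw [Real.dist_eq, Real.dist_eq]
  exact Set.abs_sub_left_of_mem_uIcc (Set.uIoc_subset_uIcc hv)

theorem integral_integral_sq_div_two {A e : ℝ → ℝ} (hA : ∀ x, HasDerivAt A (e x) x)
    (he : Continuous e) (p : ℝ) :
    ∫ p₁ in (0:ℝ)..p, ∫ p₂ in (0:ℝ)..p₁, e (p₂ ^ 2 / 2)
      = p * (∫ p₂ in (0:ℝ)..p, e (p₂ ^ 2 / 2)) - (A (p ^ 2 / 2) - A 0) := by
  have hc : Continuous fun x : ℝ => e (x ^ 2 / 2) := he.comp (by fun_prop)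
  have hΦ := hc.integral_hasStrictDerivAt 0
  have hR : ∀ x, HasDerivAt (fun x => x * (∫ p₂ in (0:ℝ)..x, e (p₂ ^ 2 / 2)) - A (x ^ 2 / 2))
      (∫ p₂ in (0:ℝ)..x, e (p₂ ^ 2 / 2)) x := fun x => by
    have hsq : HasDerivAt (fun x : ℝ => x ^ 2 / 2) x x := by
      simpa using (hasDerivAt_pow 2 x).div_const 2
    exact (((hasDerivAt_id' x).mul (hΦ x).hasDerivAt).sub ((hA _).comp x hsq)).congr_deriv
      (by ring)
  rw [integral_eq_sub_of_hasDerivAt (fun x _ => hR x)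
    ((continuous_iff_continuousAt.2 fun x => (hΦ x).hasDerivAt.continuousAt).intervalIntegrable
      _ _)]
  simp only [zero_mul, ne_eq, OfNat.ofNat_ne_zero, not_false_eq_true, zero_pow, zero_div]
  ring

/-- `Ψ v u q` is the value at time `v` of the solution of `q' = -f(v, q)` that equals `q` at
time `u`, written `Ψ^{v,u}(q)` in the paper. -/
structure IsFlow (f : ℝ → ℝ → ℝ) (Ψ : ℝ → ℝ → ℝ → ℝ) : Prop where
  hasDerivAt : ∀ u₀ q₀ u₁, HasDerivAt (fun v => Ψ v u₀ q₀) (-(f u₁ (Ψ u₁ u₀ q₀))) u₁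
  self : ∀ u q, Ψ u u q = q
  trans : ∀ u₂ u₁ u₀ q, Ψ u₂ u₁ (Ψ u₁ u₀ q) = Ψ u₂ u₀ q

namespace IsFlow

variable {f : ℝ → ℝ → ℝ} {Ψ : ℝ → ℝ → ℝ → ℝ}

theorem continuous_time (hΨ : IsFlow f Ψ) (u q : ℝ) : Continuous fun v => Ψ v u q :=
  continuous_iff_continuousAt.2 fun v => (hΨ.hasDerivAt u q v).continuousAt

theorem sub_eq_mul_exp (hΨ : IsFlow f Ψ) (hf : ContDiff ℝ 1 (uncurry f)) (v u q q' : ℝ) :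
    Ψ v u q' - Ψ v u q = (q' - q) * exp (∫ s in v..u, dslope (f s) (Ψ s u q) (Ψ s u q')) := by
  have hc : Continuous fun s => dslope (f s) (Ψ s u q) (Ψ s u q') :=
    (continuous_dslope_of_contDiff_uncurry hf).comp
      (continuous_id.prodMk ((hΨ.continuous_time u q).prodMk (hΨ.continuous_time u q')))
  have hD : ∀ s, HasDerivAt (fun s => Ψ s u q' - Ψ s u q)
      (-(dslope (f s) (Ψ s u q) (Ψ s u q') * (Ψ s u q' - Ψ s u q))) s := fun s => by
    refine ((hΨ.hasDerivAt u q' s).sub (hΨ.hasDerivAt u q s)).congr_deriv ?_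
    rw [mul_comm, ← smul_eq_mul, sub_smul_dslope]
    ring
  simpa only [hΨ.self] using eq_mul_exp_integral_of_hasDerivAt hc hD u v

theorem strictMono (hΨ : IsFlow f Ψ) (hf : ContDiff ℝ 1 (uncurry f)) (v u : ℝ) :
    StrictMono (Ψ v u) := fun q q' h =>
  sub_pos.1 <| (hΨ.sub_eq_mul_exp hf v u q q').symm ▸ mul_pos (sub_pos.2 h) (exp_pos _)

theorem continuous_value (hΨ : IsFlow f Ψ) (hf : ContDiff ℝ 1 (uncurry f)) (v u : ℝ) :
    Continuous (Ψ v u) :=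
  (hΨ.strictMono hf v u).monotone.continuous_of_surjective fun q =>
    ⟨Ψ u v q, by rw [hΨ.trans, hΨ.self]⟩

theorem continuous_initialTime (hΨ : IsFlow f Ψ) (hf : ContDiff ℝ 1 (uncurry f)) (v q : ℝ) :
    Continuous fun w => Ψ v w q :=
  continuous_of_strictMono_of_apply_eq (g := fun w => Ψ w v) (hΨ.continuous_time v)
    (fun w => hΨ.strictMono hf w v) fun w => by rw [hΨ.trans, hΨ.self]

theorem continuous_uncurry (hΨ : IsFlow f Ψ) (hf : ContDiff ℝ 1 (uncurry f)) :
    Continuous fun p : ℝ × ℝ × ℝ => Ψ p.1 p.2.1 p.2.2 := by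
  have hfrom : Continuous (uncurry fun v => Ψ v 0) :=
    continuous_uncurry_of_monotone (hΨ.continuous_time 0) (hΨ.continuous_value hf · 0)
      fun v => (hΨ.strictMono hf v 0).monotone
  have hto : Continuous (uncurry fun w => Ψ 0 w) :=
    continuous_uncurry_of_monotone (hΨ.continuous_initialTime hf 0) (hΨ.continuous_value hf 0)
      fun w => (hΨ.strictMono hf 0 w).monotone
  have hsplit : (fun p : ℝ × ℝ × ℝ => Ψ p.1 p.2.1 p.2.2) = fun p => Ψ p.1 0 (Ψ 0 p.2.1 p.2.2) :=
    funext fun p => (hΨ.trans _ _ _ _).symm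
  rw [hsplit]
  exact hfrom.comp (continuous_fst.prodMk (hto.comp continuous_snd))

theorem continuous_comp (hΨ : IsFlow f Ψ) (hf : ContDiff ℝ 1 (uncurry f)) {X : Type*}
    [TopologicalSpace X] {v u q : X → ℝ} (hv : Continuous v) (hu : Continuous u)
    (hq : Continuous q) : Continuous fun x => Ψ (v x) (u x) (q x) :=
  (hΨ.continuous_uncurry hf).comp (hv.prodMk (hu.prodMk hq))

theorem hasDerivAt_value (hΨ : IsFlow f Ψ) (hf : ContDiff ℝ 1 (uncurry f)) (v u q : ℝ) :
    HasDerivAt (Ψ v u) (exp (∫ s in v..u, deriv (f s) (Ψ s u q))) q := by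
  have hS : Continuous fun q' => exp (∫ s in v..u, dslope (f s) (Ψ s u q) (Ψ s u q')) := by
    refine (continuous_parametric_intervalIntegral_of_continuous'
      (f := fun q' s => dslope (f s) (Ψ s u q) (Ψ s u q')) ?_ v u).rexp
    exact (continuous_dslope_of_contDiff_uncurry hf).comp (continuous_snd.prodMk
      ((hΨ.continuous_comp hf continuous_snd continuous_const continuous_const).prodMk
      (hΨ.continuous_comp hf continuous_snd continuous_const continuous_fst)))
  simpa only [dslope_same] using
    hasDerivAt_of_sub_eq_mul (hΨ.sub_eq_mul_exp hf v u q) hS.continuousAt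

theorem hasDerivAt_initialTime_self (hΨ : IsFlow f Ψ) (hf : ContDiff ℝ 1 (uncurry f)) (u q : ℝ) :
    HasDerivAt (fun w => Ψ u w q) (f u q) u := by
  have hk : Continuous (uncurry fun v w => f v (Ψ v w q)) :=
    hf.continuous.comp (continuous_fst.prodMk
      (hΨ.continuous_comp hf continuous_fst continuous_snd continuous_const))
  have hrep : ∀ w, Ψ u w q = q + ∫ v in u..w, f v (Ψ v w q) := fun w => by
    rw [integral_symm, ← integral_neg,
      integral_eq_sub_of_hasDerivAt (fun v _ => hΨ.hasDerivAt w q v)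
        ((hk.comp (continuous_id.prodMk continuous_const)).neg.intervalIntegrable w u), hΨ.self]
    ring
  simpa only [← hrep, hΨ.self] using (hasDerivAt_integral_of_continuous_uncurry hk u).const_add q

theorem hasDerivAt_initialTime (hΨ : IsFlow f Ψ) (hf : ContDiff ℝ 1 (uncurry f)) (v u q : ℝ) :
    HasDerivAt (fun w => Ψ v w q) (exp (∫ s in v..u, deriv (f s) (Ψ s u q)) * f u q) u := by
  simpa only [comp_def, hΨ.trans] using (hΨ.hasDerivAt_value hf v u q).comp_of_eq u
    (hΨ.hasDerivAt_initialTime_self hf u q) (hΨ.self u q).symm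

theorem continuous_integral_deriv (hΨ : IsFlow f Ψ) (hf : ContDiff ℝ 1 (uncurry f)) (v : ℝ) :
    Continuous fun p : ℝ × ℝ => ∫ s in v..p.1, deriv (f s) (Ψ s p.1 p.2) :=
  continuous_parametric_intervalIntegral_of_continuous
    (f := fun (p : ℝ × ℝ) s => deriv (f s) (Ψ s p.1 p.2))
    ((continuous_deriv_of_contDiff_uncurry hf).comp (continuous_snd.prodMk
      (hΨ.continuous_comp hf continuous_snd (continuous_fst.comp continuous_fst)
        (continuous_snd.comp continuous_fst)))) continuous_fst

theorem integral_mul_exp_eq (hΨ : IsFlow f Ψ) (hf : ContDiff ℝ 1 (uncurry f)) (v u q : ℝ) :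
    ∫ s in v..u, f s q * exp (∫ r in v..s, deriv (f r) (Ψ r s q)) = Ψ v u q - q := by
  have hc : Continuous fun s => f s q * exp (∫ r in v..s, deriv (f r) (Ψ r s q)) :=
    (hf.continuous.comp (continuous_id.prodMk continuous_const)).mul
      ((hΨ.continuous_integral_deriv hf v).comp (continuous_id.prodMk continuous_const)).rexp
  rw [integral_eq_sub_of_hasDerivAt (f := fun w => Ψ v w q)
    (fun s _ => (hΨ.hasDerivAt_initialTime hf v s q).congr_deriv (mul_comm _ _))
    (hc.intervalIntegrable v u), hΨ.self]

end IsFlow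

/-- Corollary 1.2: the Lagrangian
`L(u,p) = ∫₀ᵖ∫₀^{p₁} exp(F_q(u,p₂²/2)) dp₂ dp₁ − F(u)` can be written as
`L(u,p) = p·φ(u,p) − Ψ^{0,u}(p²/2)` with `φ(u,p) = ∫₀ᵖ Ψ^{0,u}_q(p₂²/2) dp₂`. -/
theorem stmt9
    (fbar : ℝ → ℝ → ℝ) (hfbar : ContDiff ℝ 1 (Function.uncurry fbar))
    (Ψ : ℝ → ℝ → ℝ → ℝ)
    (hflow : ∀ u₀ q₀ u₁, HasDerivAt (fun v => Ψ v u₀ q₀) (-(fbar u₁ (Ψ u₁ u₀ q₀))) u₁)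
    (hid : ∀ u q, Ψ u u q = q)
    (hcocycle : ∀ u₂ u₁ u₀ q, Ψ u₂ u₁ (Ψ u₁ u₀ q) = Ψ u₂ u₀ q)
    (Fq : ℝ → ℝ → ℝ)
    (hFq : ∀ u q, Fq u q = ∫ u₁ in (0:ℝ)..u, deriv (fbar u₁) (Ψ u₁ u q))
    (F : ℝ → ℝ)
    (hF : ∀ u, F u = ∫ u₁ in (0:ℝ)..u, fbar u₁ 0 * Real.exp (Fq u₁ 0))
    (L : ℝ → ℝ → ℝ)
    (hL : ∀ u p, L u p
      = (∫ p₁ in (0:ℝ)..p, ∫ p₂ in (0:ℝ)..p₁, Real.exp (Fq u (p₂^2 / 2))) - F u)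
    (φ : ℝ → ℝ → ℝ)
    (hφ : ∀ u p, φ u p = ∫ p₂ in (0:ℝ)..p, deriv (Ψ 0 u) (p₂^2 / 2)) :
    ∀ u p, L u p = p * φ u p - Ψ 0 u (p^2 / 2) := by
  have hΨ : IsFlow fbar Ψ := ⟨hflow, hid, hcocycle⟩
  intro u p
  have hderiv : ∀ x, HasDerivAt (Ψ 0 u) (exp (Fq u x)) x := fun x => by
    simpa only [hFq] using hΨ.hasDerivAt_value hfbar 0 u x
  have hcont : Continuous fun x => exp (Fq u x) := by
    simpa only [hFq, comp_def, id] using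
      ((hΨ.continuous_integral_deriv hfbar 0).comp (continuous_const.prodMk continuous_id)).rexp
  have hFu : F u = Ψ 0 u 0 := by
    simp only [hF, hFq, hΨ.integral_mul_exp_eq hfbar, sub_zero]
  simp only [hL, hφ, (hderiv _).deriv, integral_integral_sq_div_two hderiv hcont, hFu]
  ring
end

section
/- Let g, h : ℝ² → ℝ be C¹ and define f(x,u,p) = (u cos x − p sin x + g(u cos x − p sin x, u sin x + p cos x))·cos x + (u sin x + p cos x + h(u cos x − p sin x, u sin x + p cos x))·sin x. If a, b : ℝ → ℝ are C¹ solutions of the planar ODE a' = g(a,b), b' = h(a,b), then u(t,x) = a(t)·cos x + b(t)·sin x is a solution of the PDE u_t = u_xx + f(x, u, u_x). -/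
/-! The map `(a, b) ↦ a cos x + b sin x` intertwines the planar flow with the PDE: its
`x`-derivative rotates `(a, b)` by a quarter turn, so `u_xx = -u`, and the rotation in the
formula for `f` recovers `(a, b)` from `(u, u_x)`. Hence `f(x, u, u_x) = u + a' cos x + b' sin x`. -/

open Real

lemma hasDerivAt_mul_cos_add_mul_sin (α β y : ℝ) :
    HasDerivAt (fun y => α * cos y + β * sin y) (-(α * sin y) + β * cos y) y :=
  (((hasDerivAt_cos y).const_mul α).add ((hasDerivAt_sin y).const_mul β)).congr_deriv (by ring)

lemma deriv_mul_cos_add_mul_sin (α β : ℝ) :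
    deriv (fun y => α * cos y + β * sin y) = fun y => -(α * sin y) + β * cos y :=
  funext fun y => (hasDerivAt_mul_cos_add_mul_sin α β y).deriv

lemma deriv_deriv_mul_cos_add_mul_sin (α β y : ℝ) :
    deriv (deriv (fun y => α * cos y + β * sin y)) y = -(α * cos y + β * sin y) := by
  have hd : HasDerivAt (fun y => -(α * sin y) + β * cos y) (-(α * cos y + β * sin y)) y :=
    (((hasDerivAt_sin y).const_mul α).neg.add ((hasDerivAt_cos y).const_mul β)).congr_deriv
      (by ring)
  rw [deriv_mul_cos_add_mul_sin, hd.deriv]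

lemma rotate_mul_cos_add_mul_sin_fst (α β x : ℝ) :
    (α * cos x + β * sin x) * cos x - (-(α * sin x) + β * cos x) * sin x = α := by
  linear_combination α * sin_sq_add_cos_sq x

lemma rotate_mul_cos_add_mul_sin_snd (α β x : ℝ) :
    (α * cos x + β * sin x) * sin x + (-(α * sin x) + β * cos x) * cos x = β := by
  linear_combination β * sin_sq_add_cos_sq x

theorem stmt13_general
    (g h : ℝ → ℝ → ℝ)
    (f : ℝ → ℝ → ℝ → ℝ)
    (hf : ∀ x u p, f x u p
      = (u * Real.cos x - p * Real.sin x
          + g (u * Real.cos x - p * Real.sin x) (u * Real.sin x + p * Real.cos x))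
          * Real.cos x
        + (u * Real.sin x + p * Real.cos x
          + h (u * Real.cos x - p * Real.sin x) (u * Real.sin x + p * Real.cos x))
          * Real.sin x)
    (a b : ℝ → ℝ)
    (ha : ∀ t, HasDerivAt a (g (a t) (b t)) t)
    (hb : ∀ t, HasDerivAt b (h (a t) (b t)) t) :
    ∀ t x,
      deriv (fun s => a s * Real.cos x + b s * Real.sin x) t
        = deriv (deriv (fun y => a t * Real.cos y + b t * Real.sin y)) x
          + f x (a t * Real.cos x + b t * Real.sin x)
              (deriv (fun y => a t * Real.cos y + b t * Real.sin y) x) := by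
  intro t x
  have hu_t : deriv (fun s => a s * cos x + b s * sin x) t
      = g (a t) (b t) * cos x + h (a t) (b t) * sin x :=
    (((ha t).mul_const (cos x)).add ((hb t).mul_const (sin x))).deriv
  rw [hu_t, deriv_deriv_mul_cos_add_mul_sin, deriv_mul_cos_add_mul_sin, hf,
    rotate_mul_cos_add_mul_sin_fst, rotate_mul_cos_add_mul_sin_snd]
  ring

/-- Embedding of a planar ODE flow: if `a' = g(a,b)`, `b' = h(a,b)`, then
`u(t,x) = a(t)cos x + b(t)sin x` solves `u_t = u_xx + f(x,u,u_x)` where `f` is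
defined by the rotation formula. -/
theorem stmt13
    (g h : ℝ → ℝ → ℝ)
    (hg : ContDiff ℝ 1 (Function.uncurry g)) (hh : ContDiff ℝ 1 (Function.uncurry h))
    (f : ℝ → ℝ → ℝ → ℝ)
    (hf : ∀ x u p, f x u p
      = (u * Real.cos x - p * Real.sin x
          + g (u * Real.cos x - p * Real.sin x) (u * Real.sin x + p * Real.cos x))
          * Real.cos x
        + (u * Real.sin x + p * Real.cos x
          + h (u * Real.cos x - p * Real.sin x) (u * Real.sin x + p * Real.cos x))
          * Real.sin x)
    (a b : ℝ → ℝ)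
    (ha : ∀ t, HasDerivAt a (g (a t) (b t)) t)
    (hb : ∀ t, HasDerivAt b (h (a t) (b t)) t) :
    ∀ t x,
      deriv (fun s => a s * Real.cos x + b s * Real.sin x) t
        = deriv (deriv (fun y => a t * Real.cos y + b t * Real.sin y)) x
          + f x (a t * Real.cos x + b t * Real.sin x)
              (deriv (fun y => a t * Real.cos y + b t * Real.sin y) x) :=
  stmt13_general g h f hf a b ha hb
end

section
/- Let f̄ : ℝ² → ℝ be C¹ with globally defined flow Ψ of dq/du = −f̄(u,q), and let L(u,p) = p·φ(u,p) − Ψ^{0,u}(p²/2) with φ(u,p) = ∫₀ᵖ Ψ^{0,u}_q(p₂²/2) dp₂. Then L is even in p up to the definition (L(u,−p) = L(u,p)), and L_{pp}(u,p) = Ψ^{0,u}_q(p²/2) > 0 for all (u,p); in particular p ↦ L(u,p) is strictly convex for each u. -/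
/-!
In one dimension the difference of two solutions of `q' = -f̄(u, q)` solves a linear equation, so
`Ψ^{t,u}(q) - Ψ^{t,u}(q₀) = (q - q₀) · exp (-∫ m)`, where `m` is the mean of `f̄_q` over the
segment between the two solutions. Hence every `Ψ^{t,u}` is strictly increasing; being onto by the
cocycle law it is continuous, and monotonicity in `q` upgrades this to joint continuity in `(t, q)`.
The same formula then exhibits the difference quotient of `Ψ^{0,u}` as a continuous function of
`q`, so `Ψ^{0,u}` is `C¹` with derivative `exp (-∫ f̄_q) > 0`. Finally `φ_p = Ψ^{0,u}_q(p²/2)` and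
`L_p = φ`, because the other two terms of `L_p` cancel; `φ` is odd since its integrand is even.
-/

open Set Real Function

theorem ContDiff.exists_continuous_hasDerivAt_snd {f : ℝ → ℝ → ℝ}
    (hf : ContDiff ℝ 1 (uncurry f)) :
    ∃ f' : ℝ → ℝ → ℝ, Continuous (uncurry f') ∧ ∀ s y, HasDerivAt (f s) (f' s y) y := by
  refine ⟨fun s y => fderiv ℝ (uncurry f) (s, y) (0, 1),
    ((hf.continuous_fderiv one_ne_zero).comp continuous_id).clm_apply continuous_const,
    fun s y => ?_⟩
  have hsection : HasDerivAt (fun y : ℝ => (s, y)) ((0 : ℝ), (1 : ℝ)) y :=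
    (hasDerivAt_const y s).prodMk (hasDerivAt_id y)
  exact ((hf.differentiable one_ne_zero) (s, y)).hasFDerivAt.comp_hasDerivAt y hsection

theorem continuous_uncurry_of_monotone_s16 {X : Type*} [TopologicalSpace X] {f : X → ℝ → ℝ}
    (hleft : ∀ q, Continuous fun s => f s q) (hright : ∀ s, Continuous (f s))
    (hmono : ∀ s, Monotone (f s)) : Continuous (uncurry f) := by
  refine continuous_iff_continuousAt.2 fun ⟨s₀, q₀⟩ =>
    tendsto_order.2 ⟨fun a ha => ?_, fun b hb => ?_⟩
  · obtain ⟨q₁, ha₁, hq₁⟩ : ∃ q₁, a < f s₀ q₁ ∧ q₁ < q₀ :=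
      (((hright s₀).continuousAt.eventually (lt_mem_nhds ha)).filter_mono
        (nhdsWithin_le_nhds (s := Iio q₀))).and self_mem_nhdsWithin |>.exists
    rw [nhds_prod_eq]
    filter_upwards [((hleft q₁).continuousAt.eventually (lt_mem_nhds ha₁)).prod_mk
      (Ioi_mem_nhds hq₁)] with ⟨s, q⟩ ⟨hs, hq⟩
    exact hs.trans_le (hmono s hq.le)
  · obtain ⟨q₂, hb₂, hq₂⟩ : ∃ q₂, f s₀ q₂ < b ∧ q₀ < q₂ :=
      (((hright s₀).continuousAt.eventually (gt_mem_nhds hb)).filter_mono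
        (nhdsWithin_le_nhds (s := Ioi q₀))).and self_mem_nhdsWithin |>.exists
    rw [nhds_prod_eq]
    filter_upwards [((hleft q₂).continuousAt.eventually (gt_mem_nhds hb₂)).prod_mk
      (Iio_mem_nhds hq₂)] with ⟨s, q⟩ ⟨hs, hq⟩
    exact (hmono s hq.le).trans_lt hs

theorem eq_mul_exp_integral_of_hasDerivAt_s16 {d g : ℝ → ℝ} (hd : ∀ s, HasDerivAt d (g s * d s) s)
    (hg : Continuous g) (t₀ t : ℝ) : d t = d t₀ * exp (∫ s in t₀..t, g s) := by
  have hG : ∀ s, HasDerivAt (fun s => ∫ r in t₀..s, g r) (g s) s := fun s =>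
    intervalIntegral.integral_hasDerivAt_right (hg.intervalIntegrable _ _)
      (hg.stronglyMeasurableAtFilter _ _) hg.continuousAt
  have hconst : ∀ s, HasDerivAt (fun s => d s * exp (-∫ r in t₀..s, g r)) 0 s := fun s =>
    ((hd s).mul (hG s).neg.exp).congr_deriv (by ring)
  have := is_const_of_deriv_eq_zero (fun s => (hconst s).differentiableAt)
    (fun s => (hconst s).deriv) t t₀
  simp only [intervalIntegral.integral_same, neg_zero, exp_zero, mul_one, exp_neg] at this
  rw [← this]
  field_simp

noncomputable def secantSlope (V' : ℝ → ℝ → ℝ) (s a b : ℝ) : ℝ :=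
  ∫ θ in (0 : ℝ)..1, V' s (b + θ * (a - b))

theorem sub_eq_mul_secantSlope {V V' : ℝ → ℝ → ℝ} (hV : ∀ s y, HasDerivAt (V s) (V' s y) y)
    (hV' : Continuous (uncurry V')) (s a b : ℝ) :
    V s a - V s b = (a - b) * secantSlope V' s a b := by
  have hseg : ∀ θ : ℝ, HasDerivAt (fun θ => V s (b + θ * (a - b)))
      (V' s (b + θ * (a - b)) * (a - b)) θ := fun θ =>
    (hV s _).comp θ (((hasDerivAt_id θ).mul_const (a - b)).const_add b |>.congr_deriv (one_mul _))
  have := intervalIntegral.integral_eq_sub_of_hasDerivAt (a := 0) (b := 1) (fun θ _ => hseg θ)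
    (Continuous.intervalIntegrable (by fun_prop) _ _)
  rw [intervalIntegral.integral_mul_const] at this
  simp only [one_mul, zero_mul, add_zero, add_sub_cancel] at this
  rw [secantSlope, ← this, mul_comm]

theorem secantSlope_self (V' : ℝ → ℝ → ℝ) (s b : ℝ) : secantSlope V' s b b = V' s b := by
  simp [secantSlope]

theorem Continuous.secantSlope {X : Type*} [TopologicalSpace X] {V' : ℝ → ℝ → ℝ}
    (hV' : Continuous (uncurry V')) {s a b : X → ℝ} (hs : Continuous s) (ha : Continuous a)
    (hb : Continuous b) : Continuous fun y => secantSlope V' (s y) (a y) (b y) :=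
  intervalIntegral.continuous_parametric_intervalIntegral_of_continuous'
    (f := fun y θ => V' (s y) (b y + θ * (a y - b y)))
    (hV'.comp (f := fun p : X × ℝ => (s p.1, b p.1 + p.2 * (a p.1 - b p.1))) (by fun_prop)) 0 1

section Trajectories

variable {V V' : ℝ → ℝ → ℝ} {x : ℝ → ℝ → ℝ} {t₀ : ℝ}

theorem continuous_trajectory (hx : ∀ q s, HasDerivAt (fun s => x s q) (V s (x s q)) s) (q : ℝ) :
    Continuous fun s => x s q :=
  continuous_iff_continuousAt.2 fun s => (hx q s).continuousAt

theorem trajectory_sub_eq_mul_exp (hV : ∀ s y, HasDerivAt (V s) (V' s y) y)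
    (hV' : Continuous (uncurry V')) (hx : ∀ q s, HasDerivAt (fun s => x s q) (V s (x s q)) s)
    (hx₀ : ∀ q, x t₀ q = q) (t q q₀ : ℝ) :
    x t q - x t q₀ = (q - q₀) * exp (∫ s in t₀..t, secantSlope V' s (x s q) (x s q₀)) := by
  have hdiff : ∀ s, HasDerivAt (fun s => x s q - x s q₀)
      (secantSlope V' s (x s q) (x s q₀) * (x s q - x s q₀)) s := fun s =>
    ((hx q s).sub (hx q₀ s)).congr_deriv (by rw [sub_eq_mul_secantSlope hV hV', mul_comm])
  have hslope := hV'.secantSlope continuous_id (continuous_trajectory hx q)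
    (continuous_trajectory hx q₀)
  rw [eq_mul_exp_integral_of_hasDerivAt_s16 hdiff hslope t₀ t, hx₀, hx₀]

theorem strictMono_trajectory (hV : ∀ s y, HasDerivAt (V s) (V' s y) y)
    (hV' : Continuous (uncurry V')) (hx : ∀ q s, HasDerivAt (fun s => x s q) (V s (x s q)) s)
    (hx₀ : ∀ q, x t₀ q = q) (t : ℝ) : StrictMono (x t) := fun q₀ q hq => by
  rw [← sub_pos, trajectory_sub_eq_mul_exp hV hV' hx hx₀ t q q₀]
  exact mul_pos (sub_pos.2 hq) (exp_pos _)

theorem continuous_uncurry_trajectory (hV : ∀ s y, HasDerivAt (V s) (V' s y) y)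
    (hV' : Continuous (uncurry V')) (hx : ∀ q s, HasDerivAt (fun s => x s q) (V s (x s q)) s)
    (hx₀ : ∀ q, x t₀ q = q) (hsurj : ∀ t, Surjective (x t)) : Continuous (uncurry x) :=
  have hmono := fun t => (strictMono_trajectory hV hV' hx hx₀ t).monotone
  continuous_uncurry_of_monotone_s16 (continuous_trajectory hx)
    (fun t => (hmono t).continuous_of_surjective (hsurj t)) hmono

theorem hasDerivAt_trajectory (hV : ∀ s y, HasDerivAt (V s) (V' s y) y)
    (hV' : Continuous (uncurry V')) (hx : ∀ q s, HasDerivAt (fun s => x s q) (V s (x s q)) s)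
    (hx₀ : ∀ q, x t₀ q = q) (hxc : Continuous (uncurry x)) (t q₀ : ℝ) :
    HasDerivAt (x t) (exp (∫ s in t₀..t, V' s (x s q₀))) q₀ := by
  set S : ℝ → ℝ := fun q => exp (∫ s in t₀..t, secantSlope V' s (x s q) (x s q₀))
  have hS : Continuous S := continuous_exp.comp <|
    intervalIntegral.continuous_parametric_intervalIntegral_of_continuous'
      (hV'.secantSlope continuous_snd (hxc.comp continuous_swap)
        (continuous_trajectory hx q₀ |>.comp continuous_snd)) t₀ t
  have hS₀ : S q₀ = exp (∫ s in t₀..t, V' s (x s q₀)) := by simp only [S, secantSlope_self]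
  rw [hasDerivAt_iff_tendsto_slope, ← hS₀]
  refine (hS.continuousAt.mono_left nhdsWithin_le_nhds).congr' ?_
  filter_upwards [self_mem_nhdsWithin] with q hq
  rw [slope_def_field, trajectory_sub_eq_mul_exp hV hV' hx hx₀ t q q₀,
    mul_div_cancel_left₀ _ (sub_ne_zero.2 hq)]

theorem contDiff_trajectory (hV : ∀ s y, HasDerivAt (V s) (V' s y) y)
    (hV' : Continuous (uncurry V')) (hx : ∀ q s, HasDerivAt (fun s => x s q) (V s (x s q)) s)
    (hx₀ : ∀ q, x t₀ q = q) (hxc : Continuous (uncurry x)) (t : ℝ) : ContDiff ℝ 1 (x t) := by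
  have hderiv := hasDerivAt_trajectory hV hV' hx hx₀ hxc t
  refine contDiff_one_iff_deriv.2 ⟨fun q => (hderiv q).differentiableAt, ?_⟩
  rw [show deriv (x t) = _ from funext fun q => (hderiv q).deriv]
  exact continuous_exp.comp <|
    intervalIntegral.continuous_parametric_intervalIntegral_of_continuous'
      (f := fun q s => V' s (x s q))
      (hV'.comp (continuous_snd.prodMk (hxc.comp continuous_swap))) t₀ t

end Trajectories

namespace Lagrangian

variable {F φ L : ℝ → ℝ}

theorem φ_neg (hφ : ∀ p, φ p = ∫ p₂ in (0 : ℝ)..p, deriv F (p₂ ^ 2 / 2)) (p : ℝ) :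
    φ (-p) = -φ p := by
  have heven : ∀ p₂ : ℝ, deriv F ((-p₂) ^ 2 / 2) = deriv F (p₂ ^ 2 / 2) := by simp
  rw [hφ, hφ, ← intervalIntegral.integral_symm, ← neg_zero, ← intervalIntegral.integral_comp_neg]
  simp only [heven, neg_zero]

theorem L_neg (hφ : ∀ p, φ p = ∫ p₂ in (0 : ℝ)..p, deriv F (p₂ ^ 2 / 2))
    (hL : ∀ p, L p = p * φ p - F (p ^ 2 / 2)) (p : ℝ) : L (-p) = L p := by
  rw [hL, hL, φ_neg hφ, neg_sq]
  ring

theorem hasDerivAt_φ (hF : ContDiff ℝ 1 F)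
    (hφ : ∀ p, φ p = ∫ p₂ in (0 : ℝ)..p, deriv F (p₂ ^ 2 / 2)) (p : ℝ) :
    HasDerivAt φ (deriv F (p ^ 2 / 2)) p := by
  have hc : Continuous fun p₂ : ℝ => deriv F (p₂ ^ 2 / 2) :=
    (contDiff_one_iff_deriv.1 hF).2.comp (by fun_prop)
  rw [show φ = _ from funext hφ]
  exact intervalIntegral.integral_hasDerivAt_right (hc.intervalIntegrable _ _)
    (hc.stronglyMeasurableAtFilter _ _) hc.continuousAt

theorem hasDerivAt_L (hF : ContDiff ℝ 1 F)
    (hφ : ∀ p, φ p = ∫ p₂ in (0 : ℝ)..p, deriv F (p₂ ^ 2 / 2))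
    (hL : ∀ p, L p = p * φ p - F (p ^ 2 / 2)) (p : ℝ) : HasDerivAt L (φ p) p := by
  have hsq : HasDerivAt (fun p : ℝ => p ^ 2 / 2) p p := by
    simpa using (hasDerivAt_pow 2 p).div_const 2
  have hF' := ((contDiff_one_iff_deriv.1 hF).1 (p ^ 2 / 2)).hasDerivAt.comp p hsq
  rw [show L = _ from funext hL]
  exact (((hasDerivAt_id p).mul (hasDerivAt_φ hF hφ p)).sub hF').congr_deriv (by simp only [one_mul, id_eq]; ring)

theorem deriv_deriv_L (hF : ContDiff ℝ 1 F)
    (hφ : ∀ p, φ p = ∫ p₂ in (0 : ℝ)..p, deriv F (p₂ ^ 2 / 2))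
    (hL : ∀ p, L p = p * φ p - F (p ^ 2 / 2)) (p : ℝ) :
    deriv (deriv L) p = deriv F (p ^ 2 / 2) := by
  rw [show deriv L = φ from funext fun p => (hasDerivAt_L hF hφ hL p).deriv]
  exact (hasDerivAt_φ hF hφ p).deriv

theorem strictConvexOn_L (hF : ContDiff ℝ 1 F) (hF' : ∀ q, 0 < deriv F q)
    (hφ : ∀ p, φ p = ∫ p₂ in (0 : ℝ)..p, deriv F (p₂ ^ 2 / 2))
    (hL : ∀ p, L p = p * φ p - F (p ^ 2 / 2)) : StrictConvexOn ℝ univ L :=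
  strictConvexOn_univ_of_deriv2_pos
    (continuous_iff_continuousAt.2 fun p => (hasDerivAt_L hF hφ hL p).continuousAt)
    fun p => by
      rw [show deriv^[2] L p = deriv (deriv L) p from rfl, deriv_deriv_L hF hφ hL]
      exact hF' _

end Lagrangian

/-- Properties of the O(2)-equivariant Lagrangian `L(u,p) = p·φ(u,p) − Ψ^{0,u}(p²/2)`:
it is even in `p`, has `L_{pp}(u,p) = Ψ^{0,u}_q(p²/2) > 0`, and is strictly convex
in `p` for each fixed `u`. -/
theorem stmt16
    (fbar : ℝ → ℝ → ℝ) (hfbar : ContDiff ℝ 1 (Function.uncurry fbar))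
    (Ψ : ℝ → ℝ → ℝ → ℝ)
    (hflow : ∀ u₀ q₀ u₁, HasDerivAt (fun v => Ψ v u₀ q₀) (-(fbar u₁ (Ψ u₁ u₀ q₀))) u₁)
    (hid : ∀ u q, Ψ u u q = q)
    (hcocycle : ∀ u₂ u₁ u₀ q, Ψ u₂ u₁ (Ψ u₁ u₀ q) = Ψ u₂ u₀ q)
    (φ : ℝ → ℝ → ℝ)
    (hφ : ∀ u p, φ u p = ∫ p₂ in (0:ℝ)..p, deriv (Ψ 0 u) (p₂^2 / 2))
    (L : ℝ → ℝ → ℝ)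
    (hL : ∀ u p, L u p = p * φ u p - Ψ 0 u (p^2 / 2)) :
    (∀ u p, L u (-p) = L u p)
    ∧ (∀ u p, deriv (fun w => deriv (fun w' => L u w') w) p = deriv (Ψ 0 u) (p^2 / 2)
        ∧ 0 < deriv (Ψ 0 u) (p^2 / 2))
    ∧ (∀ u, StrictConvexOn ℝ Set.univ (L u)) := by
  obtain ⟨fq, hfqc, hfq⟩ := hfbar.exists_continuous_hasDerivAt_snd
  have hV : ∀ s y, HasDerivAt (fun y => -fbar s y) (-fq s y) y := fun s y => (hfq s y).neg
  have hV' : Continuous (uncurry fun s y => -fq s y) := hfqc.neg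
  have hsurj : ∀ u t, Surjective (Ψ t u) := fun u t q => ⟨Ψ u t q, by rw [hcocycle, hid]⟩
  have hxc : ∀ u, Continuous (uncurry fun t q => Ψ t u q) := fun u =>
    continuous_uncurry_trajectory hV hV' (hflow u) (hid u) (hsurj u)
  have hC1 : ∀ u, ContDiff ℝ 1 (Ψ 0 u) := fun u =>
    contDiff_trajectory hV hV' (hflow u) (hid u) (hxc u) 0
  have hpos : ∀ u q, 0 < deriv (Ψ 0 u) q := fun u q =>
    (hasDerivAt_trajectory hV hV' (hflow u) (hid u) (hxc u) 0 q).deriv ▸ exp_pos _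
  exact ⟨fun u => Lagrangian.L_neg (hφ u) (hL u),
    fun u p => ⟨Lagrangian.deriv_deriv_L (hC1 u) (hφ u) (hL u) p, hpos u _⟩,
    fun u => Lagrangian.strictConvexOn_L (hC1 u) (hpos u) (hφ u) (hL u)⟩
end
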